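/- arXiv:2006.14527 — 6 statements merged into one kernel-verified Lean document; each statement's English description precedes it below -/
import Mathlib

section
/- Let T be a tournament and let C_3(T) be the 3-hypergraph on V(T) whose edges are exactly the 3-element subsets X of V(T) such that T restricted to X is a 3-cycle. Then every module of T is a module of C_3(T). -/
/-- `M` is a module of the hypergraph with vertex set `verts` and edge set `edges`. -/
def IsModule {α : Type*} [DecidableEq α] (verts : Finset α) (edges : Set (Finset α))
    (M : Finset α) : Prop :=
  M ⊆ verts ∧ ∀ e ∈ edges, (e ∩ M).Nonempty → (e \ M).Nonempty →
    ∃ m ∈ M, e ∩ M = {m} ∧ ∀ n ∈ M, (e \ {m}) ∪ {n} ∈ edges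

/-- `(verts, edges)` is a hypergraph: edges are nonempty subsets of `verts`. -/
def IsHypergraph {α : Type*} (verts : Finset α) (edges : Set (Finset α)) : Prop :=
  ∀ e ∈ edges, e ⊆ verts ∧ e.Nonempty

/-- `(verts, edges)` is a 3-hypergraph: edges are 3-element subsets of `verts`. -/
def Is3Hypergraph {α : Type*} (verts : Finset α) (edges : Set (Finset α)) : Prop :=
  ∀ e ∈ edges, e ⊆ verts ∧ e.card = 3

/-- Edges of the subhypergraph induced by `W`. -/
def induceEdges {α : Type*} (W : Finset α) (edges : Set (Finset α)) : Set (Finset α) :=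
  {e ∈ edges | e ⊆ W}

/-- A hypergraph is prime if it has at least 3 vertices and all its modules are trivial. -/
def IsPrime {α : Type*} [DecidableEq α] (verts : Finset α) (edges : Set (Finset α)) : Prop :=
  3 ≤ verts.card ∧ ∀ M, IsModule verts edges M → M = ∅ ∨ M = verts ∨ ∃ v, M = {v}

/-- A prime hypergraph is critical if removing any vertex destroys primality. -/
def IsCritical {α : Type*} [DecidableEq α] (verts : Finset α) (edges : Set (Finset α)) : Prop :=
  IsPrime verts edges ∧
    ∀ v ∈ verts, ¬ IsPrime (verts.erase v) (induceEdges (verts.erase v) edges)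

/-- Adjacency in the primality graph: `v ≠ w` and `H - {v, w}` is prime. -/
def PrimAdj {α : Type*} [DecidableEq α] (verts : Finset α) (edges : Set (Finset α))
    (v w : α) : Prop :=
  v ≠ w ∧ v ∈ verts ∧ w ∈ verts ∧
    IsPrime (verts \ {v, w}) (induceEdges (verts \ {v, w}) edges)


/-- `(verts, arc)` is a tournament: the arc relation is irreflexive and, on distinct
vertices of `verts`, exactly one of `arc x y`, `arc y x` holds. -/
def IsTournament {α : Type*} (verts : Finset α) (arc : α → α → Prop) : Prop :=
  (∀ x, ¬ arc x x) ∧ ∀ x ∈ verts, ∀ y ∈ verts, x ≠ y → (arc x y ↔ ¬ arc y x)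

/-- `M` is a module of the tournament `(verts, arc)`. -/
def TournMod {α : Type*} (verts : Finset α) (arc : α → α → Prop) (M : Finset α) : Prop :=
  M ⊆ verts ∧ ∀ x ∈ M, ∀ y ∈ M, ∀ v ∈ verts, arc x v → arc v y → v ∈ M

/-- The edge set of the C₃-structure of a tournament: the 3-sets inducing a 3-cycle. -/
def c3Edges {α : Type*} [DecidableEq α] (verts : Finset α) (arc : α → α → Prop) :
    Set (Finset α) :=
  {e | ∃ x y z, x ∈ verts ∧ y ∈ verts ∧ z ∈ verts ∧
    x ≠ y ∧ y ≠ z ∧ x ≠ z ∧ arc x y ∧ arc y z ∧ arc z x ∧ e = {x, y, z}}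

lemma c3_aux {α : Type*} [DecidableEq α] (verts : Finset α) (arc : α → α → Prop)
    (hT : IsTournament verts arc) (M : Finset α) (hM : TournMod verts arc M)
    (x y z : α) (hxv : x ∈ verts) (hyv : y ∈ verts) (hzv : z ∈ verts)
    (hxy : x ≠ y) (hyz : y ≠ z) (hxz : x ≠ z)
    (axy : arc x y) (ayz : arc y z) (azx : arc z x)
    (hxM : x ∈ M) (hyM : y ∉ M) (hzM : z ∉ M) :
    ∃ m ∈ M, ({x, y, z} : Finset α) ∩ M = {m} ∧
      ∀ n ∈ M, (({x, y, z} : Finset α) \ {m}) ∪ {n} ∈ c3Edges verts arc := by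
  refine ⟨x, hxM, ?_, ?_⟩
  · ext a
    simp only [Finset.mem_inter, Finset.mem_insert, Finset.mem_singleton]
    constructor
    · rintro ⟨h1 | h1 | h1, h2⟩ <;> subst h1
      · rfl
      · exact absurd h2 hyM
      · exact absurd h2 hzM
    · rintro rfl; exact ⟨Or.inl rfl, hxM⟩
  · intro n hnM
    have hnv : n ∈ verts := hM.1 hnM
    have hny : n ≠ y := fun h => hyM (h ▸ hnM)
    have hnz : n ≠ z := fun h => hzM (h ▸ hnM)
    have hany : arc n y := by
      by_cases h : n = x
      · exact h ▸ axy
      · have hyn : ¬ arc y n := fun hyn => hyM (hM.2 x hxM n hnM y hyv axy hyn)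
        by_contra hc
        exact hyn ((hT.2 y hyv n hnv hny.symm).mpr hc)
    have hazn : arc z n := by
      by_cases h : n = x
      · exact h ▸ azx
      · have hnz' : ¬ arc n z := fun hnz' => hzM (hM.2 n hnM x hxM z hzv hnz' azx)
        exact (hT.2 z hzv n hnv hnz.symm).mpr hnz'
    refine ⟨n, y, z, hnv, hyv, hzv, hny, hyz, hnz, hany, ayz, hazn, ?_⟩
    ext a
    simp only [Finset.mem_union, Finset.mem_sdiff, Finset.mem_insert, Finset.mem_singleton]
    constructor
    · rintro (⟨h | h | h, hne⟩ | h) <;> tauto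
    · rintro (h | h | h)
      · exact Or.inr h
      · exact Or.inl ⟨Or.inr (Or.inl h), h ▸ hxy.symm⟩
      · exact Or.inl ⟨Or.inr (Or.inr h), h ▸ hxz.symm⟩

theorem tournament_module_is_c3_module {α : Type*} [DecidableEq α]
    (verts : Finset α) (arc : α → α → Prop) (hT : IsTournament verts arc)
    (M : Finset α) (hM : TournMod verts arc M) :
    IsModule verts (c3Edges verts arc) M := by
  refine ⟨hM.1, ?_⟩
  rintro e ⟨x, y, z, hxv, hyv, hzv, hxy, hyz, hxz, axy, ayz, azx, rfl⟩ hint hdiff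
  obtain ⟨d, hd⟩ := hdiff
  rw [Finset.mem_sdiff] at hd
  have hdmem := hd.1
  simp only [Finset.mem_insert, Finset.mem_singleton] at hdmem
  -- if two of x,y,z are in M then all three are
  have h12 : x ∈ M → y ∈ M → False := by
    intro hx hy
    have hz : z ∈ M := hM.2 y hy x hx z hzv ayz azx
    rcases hdmem with h | h | h <;> exact hd.2 (h ▸ ‹_›)
  have h23 : y ∈ M → z ∈ M → False := by
    intro hy hz
    have hx : x ∈ M := hM.2 z hz y hy x hxv azx axy
    rcases hdmem with h | h | h <;> exact hd.2 (h ▸ ‹_›)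
  have h31 : z ∈ M → x ∈ M → False := by
    intro hz hx
    have hy : y ∈ M := hM.2 x hx z hz y hyv axy ayz
    rcases hdmem with h | h | h <;> exact hd.2 (h ▸ ‹_›)
  obtain ⟨w, hw⟩ := hint
  rw [Finset.mem_inter] at hw
  have hwmem := hw.1
  simp only [Finset.mem_insert, Finset.mem_singleton] at hwmem
  rcases hwmem with h | h | h <;> rw [h] at hw
  · exact c3_aux verts arc hT M hM x y z hxv hyv hzv hxy hyz hxz axy ayz azx
      hw.2 (fun hy => h12 hw.2 hy) (fun hz => h31 hz hw.2)
  · have hrw : ({x, y, z} : Finset α) = {y, z, x} := by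
      ext a
      simp only [Finset.mem_insert, Finset.mem_singleton]
      constructor <;> rintro (rfl | rfl | rfl) <;> simp
    rw [hrw]
    exact c3_aux verts arc hT M hM y z x hyv hzv hxv hyz hxz.symm hxy.symm ayz azx axy
      hw.2 (fun hz => h23 hw.2 hz) (fun hx => h12 hx hw.2)
  · have hrw : ({x, y, z} : Finset α) = {z, x, y} := by
      ext a
      simp only [Finset.mem_insert, Finset.mem_singleton]
      constructor <;> rintro (rfl | rfl | rfl) <;> simp
    rw [hrw]
    exact c3_aux verts arc hT M hM z x y hzv hxv hyv hxz.symm hxy hyz.symm azx axy ayz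
      hw.2 (fun hx => h31 hw.2 hx) (fun hy => h23 hy hw.2)
end

section
/- Let H be a 3-hypergraph, X ⊊ V(H) with H[X] prime, and M a module of H. Then exactly one of the following holds: M ∩ X = ∅, or X ⊆ M, or M ∩ X = {y} for some y ∈ X. -/
theorem module_versus_prime_subset {α : Type*} [DecidableEq α]
    (verts : Finset α) (edges : Set (Finset α)) (h3 : Is3Hypergraph verts edges)
    (X : Finset α) (hX : X ⊂ verts) (hXp : IsPrime X (induceEdges X edges))
    (M : Finset α) (hM : IsModule verts edges M) :
    (M ∩ X = ∅ ∨ X ⊆ M ∨ ∃ y ∈ X, M ∩ X = {y}) ∧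
      ¬(M ∩ X = ∅ ∧ X ⊆ M) ∧
      ¬(M ∩ X = ∅ ∧ ∃ y ∈ X, M ∩ X = {y}) ∧
      ¬(X ⊆ M ∧ ∃ y ∈ X, M ∩ X = {y}) := by
  have hXne : 3 ≤ X.card := hXp.1
  have hmod : IsModule X (induceEdges X edges) (M ∩ X) := by
    constructor
    · exact Finset.inter_subset_right
    · rintro e ⟨he, heX⟩ hne hne'
      have h1 : e ∩ (M ∩ X) = e ∩ M := by
        ext x; simp only [Finset.mem_inter]
        exact ⟨fun ⟨a, b, _⟩ => ⟨a, b⟩, fun ⟨a, b⟩ => ⟨a, b, heX a⟩⟩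
      have h2 : e \ (M ∩ X) = e \ M := by
        ext x; simp only [Finset.mem_sdiff, Finset.mem_inter]
        constructor
        · rintro ⟨a, b⟩; exact ⟨a, fun hm => b ⟨hm, heX a⟩⟩
        · rintro ⟨a, b⟩; exact ⟨a, fun ⟨hm, _⟩ => b hm⟩
      rw [h1] at hne; rw [h2] at hne'
      obtain ⟨m, hmM, hem, hrep⟩ := hM.2 e he hne hne'
      have hmX : m ∈ X := heX (Finset.mem_inter.1 (hem ▸ Finset.mem_singleton_self m)).1
      refine ⟨m, Finset.mem_inter.2 ⟨hmM, hmX⟩, ?_, ?_⟩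
      · rw [h1, hem]
      · rintro n hn
        obtain ⟨hnM, hnX⟩ := Finset.mem_inter.1 hn
        refine ⟨hrep n hnM, ?_⟩
        intro x hx
        rcases Finset.mem_union.1 hx with h | h
        · exact heX (Finset.mem_sdiff.1 h).1
        · rw [Finset.mem_singleton.1 h]; exact hnX
  have htri := hXp.2 (M ∩ X) hmod
  have hnonempty : X ≠ ∅ := by
    intro h; rw [h] at hXne; simp at hXne
  refine ⟨?_, ?_, ?_, ?_⟩
  · rcases htri with h | h | ⟨v, h⟩
    · exact Or.inl h
    · refine Or.inr (Or.inl ?_)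
      intro x hx
      exact (Finset.mem_inter.1 (h ▸ hx)).1
    · refine Or.inr (Or.inr ⟨v, ?_, h⟩)
      have : v ∈ M ∩ X := h ▸ Finset.mem_singleton_self v
      exact (Finset.mem_inter.1 this).2
  · rintro ⟨h1, h2⟩
    obtain ⟨x, hx⟩ := Finset.nonempty_iff_ne_empty.2 hnonempty
    have : x ∈ M ∩ X := Finset.mem_inter.2 ⟨h2 hx, hx⟩
    rw [h1] at this; simp at this
  · rintro ⟨h1, y, _, h2⟩
    rw [h1] at h2; exact Finset.singleton_ne_empty y h2.symm
  · rintro ⟨h1, y, hy, h2⟩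
    have hXsub : X ⊆ {y} := fun x hx => h2 ▸ Finset.mem_inter.2 ⟨h1 hx, hx⟩
    have := Finset.card_le_card hXsub
    simp at this
    omega
end

section
/- Let H be a 3-hypergraph, X ⊊ V(H) with H[X] prime, and M a module of H. If X ⊆ M, then every element of V(H) \ M lies in ⟨X⟩_H, i.e., for each v ∈ V(H) \ M, the set X is a module of H[X ∪ {v}]. -/
theorem module_containing_prime_subset {α : Type*} [DecidableEq α]
    (verts : Finset α) (edges : Set (Finset α)) (h3 : Is3Hypergraph verts edges)
    (X : Finset α) (hX : X ⊂ verts) (hXp : IsPrime X (induceEdges X edges))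
    (M : Finset α) (hM : IsModule verts edges M) (hXM : X ⊆ M) :
    ∀ v ∈ verts \ M, IsModule (X ∪ {v}) (induceEdges (X ∪ {v}) edges) X := by
  intro v hv
  simp only [Finset.mem_sdiff] at hv
  refine ⟨Finset.subset_union_left, ?_⟩
  intro e he hex hexc
  obtain ⟨hee, hes⟩ := he
  -- v ∈ e
  obtain ⟨a, ha⟩ := hexc
  simp only [Finset.mem_sdiff] at ha
  have hav : a = v := by
    have := hes ha.1
    simp only [Finset.mem_union, Finset.mem_singleton] at this
    tauto
  have hvM : v ∉ M := hv.2
  have hM2 := hM.2 e hee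
    ⟨hex.choose, Finset.mem_inter.2 ⟨(Finset.mem_inter.1 hex.choose_spec).1,
      hXM (Finset.mem_inter.1 hex.choose_spec).2⟩⟩
    ⟨v, Finset.mem_sdiff.2 ⟨hav ▸ ha.1, hvM⟩⟩
  obtain ⟨m, hmM, hem, hall⟩ := hM2
  have hmX : m ∈ X := by
    obtain ⟨b, hb⟩ := hex
    have hbM : b ∈ e ∩ M := Finset.mem_inter.2
      ⟨(Finset.mem_inter.1 hb).1, hXM (Finset.mem_inter.1 hb).2⟩
    rw [hem, Finset.mem_singleton] at hbM
    exact hbM ▸ (Finset.mem_inter.1 hb).2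
  refine ⟨m, hmX, ?_, ?_⟩
  · apply Finset.Subset.antisymm
    · intro x hx
      rw [← hem]
      exact Finset.mem_inter.2 ⟨(Finset.mem_inter.1 hx).1, hXM (Finset.mem_inter.1 hx).2⟩
    · intro x hx
      rw [Finset.mem_singleton] at hx
      have hmm : m ∈ e ∩ M := hem ▸ Finset.mem_singleton_self m
      rw [hx]
      exact Finset.mem_inter.2 ⟨(Finset.mem_inter.1 hmm).1, hmX⟩
  · intro n hnX
    refine ⟨hall n (hXM hnX), ?_⟩
    intro x hx
    simp only [Finset.mem_union, Finset.mem_sdiff, Finset.mem_singleton] at hx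
    rcases hx with ⟨hxe, _⟩ | hxn
    · exact hes hxe
    · exact Finset.mem_union_left _ (hxn ▸ hnX)
end

section
/- Let H be a hypergraph and let M, N be modules of H. If M ∩ N ≠ ∅, then M ∪ N is a module of H. -/
lemma union_module_aux {α : Type*} [DecidableEq α] (verts : Finset α) (edges : Set (Finset α))
    (A B : Finset α) (hA : IsModule verts edges A) (hB : IsModule verts edges B)
    (x : α) (hxA : x ∈ A) (hxB : x ∈ B)
    (e : Finset α) (he : e ∈ edges) (m : α) (hem : e ∩ A = {m})
    (heB : e ∩ B = ∅) (heA : (e \ A).Nonempty) :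
    ∀ p ∈ B, (e \ {m}) ∪ {p} ∈ edges := by
  intro p hp
  have hme : m ∈ e := by
    have : m ∈ e ∩ A := by rw [hem]; exact Finset.mem_singleton_self m
    exact (Finset.mem_inter.1 this).1
  have hxe : x ∉ e := by
    intro hx
    have : x ∈ e ∩ B := Finset.mem_inter.2 ⟨hx, hxB⟩
    rw [heB] at this; exact absurd this (Finset.notMem_empty x)
  -- swap m for x inside A
  obtain ⟨m', hm'A, hem', hswapA⟩ := hA.2 e he ⟨m, by rw [hem]; exact Finset.mem_singleton_self m⟩ heA
  have hmm' : m' = m := by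
    have := hem'.symm.trans hem
    exact (Finset.singleton_inj.1 this)
  rw [hmm'] at hswapA
  have he1 : (e \ {m}) ∪ {x} ∈ edges := hswapA x hxA
  set e1 := (e \ {m}) ∪ {x} with he1def
  -- e1 ∩ B = {x}
  have he1B : e1 ∩ B = {x} := by
    ext z
    simp only [he1def, Finset.mem_inter, Finset.mem_union, Finset.mem_sdiff,
      Finset.mem_singleton]
    constructor
    · rintro ⟨hz1 | rfl, hzB⟩
      · exfalso
        have : z ∈ e ∩ B := Finset.mem_inter.2 ⟨hz1.1, hzB⟩
        rw [heB] at this; exact absurd this (Finset.notMem_empty z)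
      · rfl
    · rintro rfl; exact ⟨Or.inr rfl, hxB⟩
  -- e1 \ B nonempty: take y ∈ e \ A
  obtain ⟨y, hy⟩ := heA
  rw [Finset.mem_sdiff] at hy
  have hyB : y ∉ B := by
    intro h
    have : y ∈ e ∩ B := Finset.mem_inter.2 ⟨hy.1, h⟩
    rw [heB] at this; exact absurd this (Finset.notMem_empty y)
  have hmA : m ∈ A := by
    have : m ∈ e ∩ A := by rw [hem]; exact Finset.mem_singleton_self m
    exact (Finset.mem_inter.1 this).2
  have hym : y ≠ m := fun h => hy.2 (h ▸ hmA)
  have he1Bsd : (e1 \ B).Nonempty := ⟨y, Finset.mem_sdiff.2 ⟨by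
    simp only [he1def, Finset.mem_union, Finset.mem_sdiff, Finset.mem_singleton]
    exact Or.inl ⟨hy.1, hym⟩, hyB⟩⟩
  obtain ⟨n', hn'B, he1n', hswapB⟩ := hB.2 e1 he1 ⟨x, by rw [he1B]; exact Finset.mem_singleton_self x⟩ he1Bsd
  have hnx : n' = x := by
    have := he1n'.symm.trans he1B
    exact Finset.singleton_inj.1 this
  rw [hnx] at hswapB
  have := hswapB p hp
  have heq : e1 \ {x} = e \ {m} := by
    ext z
    simp only [he1def, Finset.mem_sdiff, Finset.mem_union, Finset.mem_singleton]
    constructor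
    · rintro ⟨hz1 | rfl, hzx⟩
      · exact hz1
      · exact absurd rfl hzx
    · intro hz
      exact ⟨Or.inl hz, fun h => hxe (h ▸ hz.1)⟩
  rwa [heq] at this

theorem union_of_overlapping_modules {α : Type*} [DecidableEq α]
    (verts : Finset α) (edges : Set (Finset α)) (hH : IsHypergraph verts edges)
    (M N : Finset α) (hM : IsModule verts edges M) (hN : IsModule verts edges N)
    (hMN : (M ∩ N).Nonempty) :
    IsModule verts edges (M ∪ N) := by
  obtain ⟨x, hx⟩ := hMN
  rw [Finset.mem_inter] at hx
  obtain ⟨hxM, hxN⟩ := hx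
  refine ⟨Finset.union_subset hM.1 hN.1, ?_⟩
  intro e he h1 h2
  obtain ⟨y, hy⟩ := h2
  rw [Finset.mem_sdiff, Finset.mem_union] at hy
  push_neg at hy
  obtain ⟨hye, hyM, hyN⟩ : _ ∧ _ ∧ _ := ⟨hy.1, hy.2.1, hy.2.2⟩
  have heM : (e \ M).Nonempty := ⟨y, Finset.mem_sdiff.2 ⟨hye, hyM⟩⟩
  have heN : (e \ N).Nonempty := ⟨y, Finset.mem_sdiff.2 ⟨hye, hyN⟩⟩
  by_cases hN0 : (e ∩ N).Nonempty
  · obtain ⟨n, hnN, hen, hswapN⟩ := hN.2 e he hN0 heN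
    by_cases hM0 : (e ∩ M).Nonempty
    · obtain ⟨m, hmM, hem, hswapM⟩ := hM.2 e he hM0 heM
      have hme : m ∈ e := (Finset.mem_inter.1 (by rw [hem]; exact Finset.mem_singleton_self m)).1
      have hne : n ∈ e := (Finset.mem_inter.1 (by rw [hen]; exact Finset.mem_singleton_self n)).1
      -- show m = n
      have hmn : m = n := by
        by_contra hmn
        have he1 : (e \ {m}) ∪ {x} ∈ edges := hswapM x hxM
        set e1 := (e \ {m}) ∪ {x} with he1def
        have hxe1 : x ∈ e1 := Finset.mem_union_right _ (Finset.mem_singleton_self x)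
        have hne1 : n ∈ e1 := Finset.mem_union_left _
          (Finset.mem_sdiff.2 ⟨hne, by simp [Ne.symm hmn]⟩)
        have he1Nsd : (e1 \ N).Nonempty := by
          refine ⟨y, Finset.mem_sdiff.2 ⟨Finset.mem_union_left _
            (Finset.mem_sdiff.2 ⟨hye, ?_⟩), hyN⟩⟩
          simp only [Finset.mem_singleton]
          rintro rfl; exact hyM hmM
        obtain ⟨n', hn'N, he1n', _⟩ := hN.2 e1 he1 ⟨x, Finset.mem_inter.2 ⟨hxe1, hxN⟩⟩ he1Nsd
        have hxn' : x = n' := Finset.mem_singleton.1 (he1n' ▸ Finset.mem_inter.2 ⟨hxe1, hxN⟩)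
        have hnn' : n = n' := Finset.mem_singleton.1 (he1n' ▸ Finset.mem_inter.2 ⟨hne1, hnN⟩)
        have hxn : x = n := hxn'.trans hnn'.symm
        have hnM : n ∈ M := hxn ▸ hxM
        exact hmn (Finset.mem_singleton.1 (hem ▸ Finset.mem_inter.2 ⟨hne, hnM⟩)).symm
      refine ⟨m, Finset.mem_union_left _ hmM, ?_, ?_⟩
      · ext z
        simp only [Finset.mem_inter, Finset.mem_union, Finset.mem_singleton]
        constructor
        · rintro ⟨hz, hzM | hzN⟩
          · exact Finset.mem_singleton.1 (hem ▸ Finset.mem_inter.2 ⟨hz, hzM⟩)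
          · exact hmn ▸ Finset.mem_singleton.1 (hen ▸ Finset.mem_inter.2 ⟨hz, hzN⟩)
        · rintro rfl; exact ⟨hme, Or.inl hmM⟩
      · intro p hp
        rcases Finset.mem_union.1 hp with hpM | hpN
        · exact hswapM p hpM
        · exact hmn ▸ hswapN p hpN
    · -- e ∩ M = ∅
      rw [Finset.not_nonempty_iff_eq_empty] at hM0
      have hne : n ∈ e := (Finset.mem_inter.1 (by rw [hen]; exact Finset.mem_singleton_self n)).1
      refine ⟨n, Finset.mem_union_right _ hnN, ?_, ?_⟩
      · ext z
        simp only [Finset.mem_inter, Finset.mem_union, Finset.mem_singleton]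
        constructor
        · rintro ⟨hz, hzM | hzN⟩
          · exact absurd (Finset.mem_inter.2 ⟨hz, hzM⟩) (by rw [hM0]; exact Finset.notMem_empty z)
          · exact Finset.mem_singleton.1 (hen ▸ Finset.mem_inter.2 ⟨hz, hzN⟩)
        · rintro rfl
          exact ⟨hne, Or.inr hnN⟩
      · intro p hp
        rcases Finset.mem_union.1 hp with hpM | hpN
        · exact union_module_aux verts edges N M hN hM x hxN hxM e he n hen hM0 heN p hpM
        · exact hswapN p hpN
  · -- e ∩ N = ∅
    rw [Finset.not_nonempty_iff_eq_empty] at hN0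
    have hM0 : (e ∩ M).Nonempty := by
      obtain ⟨z, hz⟩ := h1
      rw [Finset.mem_inter, Finset.mem_union] at hz
      rcases hz.2 with hzM | hzN
      · exact ⟨z, Finset.mem_inter.2 ⟨hz.1, hzM⟩⟩
      · exact absurd (Finset.mem_inter.2 ⟨hz.1, hzN⟩)
          (by rw [hN0]; exact Finset.notMem_empty z)
    obtain ⟨m, hmM, hem, hswapM⟩ := hM.2 e he hM0 heM
    have hme : m ∈ e := (Finset.mem_inter.1 (by rw [hem]; exact Finset.mem_singleton_self m)).1
    refine ⟨m, Finset.mem_union_left _ hmM, ?_, ?_⟩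
    · ext z
      simp only [Finset.mem_inter, Finset.mem_union, Finset.mem_singleton]
      constructor
      · rintro ⟨hz, hzM | hzN⟩
        · exact Finset.mem_singleton.1 (hem ▸ Finset.mem_inter.2 ⟨hz, hzM⟩)
        · exact absurd (Finset.mem_inter.2 ⟨hz, hzN⟩) (by rw [hN0]; exact Finset.notMem_empty z)
      · rintro rfl
        exact ⟨hme, Or.inl hmM⟩
    · intro p hp
      rcases Finset.mem_union.1 hp with hpM | hpN
      · exact hswapM p hpM
      · exact union_module_aux verts edges M N hM hN x hxM hxN e he m hem hN0 heM p hpN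
end

section
/- Let H be a critical 3-hypergraph with |V(H)| ≥ 5 and let 𝒫(H) be its primality graph. Then for every vertex v ∈ V(H), the degree of v in 𝒫(H) is at most 2. -/
/-!
Fix a vertex `v`. Since `H` is critical, `H - v` has a module `M` with `2 ≤ |M|` and
`M ≠ V(H) \ {v}`. For every neighbour `w` of `v` in the primality graph, the trace `M \ {w}`
is a module of the prime hypergraph `H - {v, w}`, hence trivial; this forces either
`M = V(H) \ {v, w}` or `M = {w, x}` for some `x`. The first alternative determines `w`, and it
is incompatible with the second since `|V(H)| ≥ 5`, so `v` has at most two neighbours.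
-/

open Finset

section

variable {α : Type*}

lemma induceEdges_induceEdges {V W : Finset α} {E : Set (Finset α)} (hWV : W ⊆ V) :
    induceEdges W (induceEdges V E) = induceEdges W E := by
  ext e
  exact ⟨fun ⟨⟨heE, _⟩, heW⟩ => ⟨heE, heW⟩,
    fun ⟨heE, heW⟩ => ⟨⟨heE, heW.trans hWV⟩, heW⟩⟩

variable [DecidableEq α]

lemma IsModule.inter_induceEdges {V W M : Finset α} {E : Set (Finset α)}
    (hM : IsModule V E M) : IsModule W (induceEdges W E) (M ∩ W) := by
  refine ⟨inter_subset_right, fun e ⟨heE, heW⟩ hmeet hleave => ?_⟩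
  have hinter : e ∩ (M ∩ W) = e ∩ M := by
    rw [← inter_assoc, inter_eq_left.mpr (inter_subset_left.trans heW)]
  have hdiff : e \ (M ∩ W) = e \ M := by
    ext x
    simp only [mem_sdiff, mem_inter]
    exact ⟨fun ⟨hx, hxMW⟩ => ⟨hx, fun hxM => hxMW ⟨hxM, heW hx⟩⟩, fun ⟨hx, hxM⟩ =>
      ⟨hx, fun hxMW => hxM hxMW.1⟩⟩
  rw [hinter] at hmeet
  rw [hdiff] at hleave
  obtain ⟨m, hmM, hm, hswap⟩ := hM.2 e heE hmeet hleave
  have hmW : m ∈ W := heW (mem_inter.mp (hm ▸ mem_singleton_self m)).1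
  refine ⟨m, mem_inter.mpr ⟨hmM, hmW⟩, hinter.trans hm, fun n hn => ?_⟩
  obtain ⟨hnM, hnW⟩ := mem_inter.mp hn
  exact ⟨hswap n hnM, union_subset (sdiff_subset.trans heW) (singleton_subset_iff.mpr hnW)⟩

lemma exists_isModule_of_not_isPrime {V : Finset α} {E : Set (Finset α)}
    (hV : 3 ≤ #V) (h : ¬ IsPrime V E) : ∃ M, IsModule V E M ∧ 2 ≤ #M ∧ M ≠ V := by
  simp only [IsPrime, hV, true_and, not_forall, not_or, not_exists] at h
  obtain ⟨M, hM, hMempty, hMV, hMsingleton⟩ := h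
  have hM1 : #M ≠ 1 := fun h => by
    obtain ⟨x, rfl⟩ := card_eq_one.mp h
    exact hMsingleton x rfl
  have hM0 : #M ≠ 0 := fun h => hMempty (card_eq_zero.mp h)
  exact ⟨M, hM, by omega, hMV⟩

lemma IsModule.eq_erase_or_card_eq_two {V M : Finset α} {E : Set (Finset α)} {w : α}
    (hM : IsModule V E M) (hM2 : 2 ≤ #M) (hMV : M ≠ V) (hw : w ∈ V)
    (hprime : IsPrime (V.erase w) (induceEdges (V.erase w) E)) :
    M = V.erase w ∨ (w ∈ M ∧ #M = 2) := by
  have htrace : M ∩ V.erase w = M.erase w := by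
    rw [inter_erase, inter_eq_left.mpr hM.1]
  have hmod := hM.inter_induceEdges (W := V.erase w)
  rw [htrace] at hmod
  have herase_card : #M - 1 ≤ #(M.erase w) := pred_card_le_card_erase
  rcases hprime.2 _ hmod with hempty | hfull | ⟨x, hx⟩
  · rw [hempty, card_empty] at herase_card
    omega
  · by_cases hwM : w ∈ M
    · exact absurd (by rw [← insert_erase hwM, hfull, insert_erase hw]) hMV
    · exact .inl ((erase_eq_of_notMem hwM).symm.trans hfull)
  · by_cases hwM : w ∈ M
    · have := card_erase_of_mem hwM
      rw [hx, card_singleton] at this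
      exact .inr ⟨hwM, by omega⟩
    · rw [erase_eq_of_notMem hwM] at hx
      rw [hx, card_singleton] at hM2
      omega

lemma card_le_two_of_forall_eq_erase_or_card_eq_two {V M S : Finset α} (hV : 4 ≤ #V)
    (hSV : S ⊆ V) (hS : ∀ x ∈ S, M = V.erase x ∨ (x ∈ M ∧ #M = 2)) : #S ≤ 2 := by
  by_cases hM : #M = 2
  · have hSM : S ⊆ M := fun x hx => by
      rcases hS x hx with rfl | ⟨hxM, -⟩
      · have := card_erase_of_mem (hSV hx)
        omega
      · exact hxM
    exact hM ▸ card_le_card hSM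
  · have hM_eq : ∀ x ∈ S, V.erase x = M := fun x hx =>
      ((hS x hx).resolve_right fun h => hM h.2).symm
    have : #S ≤ 1 := card_le_one.mpr fun x hx y hy =>
      erase_injOn V (hSV hx) (hSV hy) ((hM_eq x hx).trans (hM_eq y hy).symm)
    omega

lemma PrimAdj.isPrime_erase_erase {V : Finset α} {E : Set (Finset α)} {v w : α}
    (h : PrimAdj V E v w) :
    IsPrime ((V.erase v).erase w)
      (induceEdges ((V.erase v).erase w) (induceEdges (V.erase v) E)) := by
  have hdiff : V \ {v, w} = (V.erase v).erase w := by
    rw [sdiff_insert, ← erase_eq, erase_right_comm]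
  rw [induceEdges_induceEdges (erase_subset w _), ← hdiff]
  exact h.2.2.2

end

theorem primality_graph_degree_le_two_general {α : Type*} [DecidableEq α]
    (verts : Finset α) (edges : Set (Finset α))
    (hc : IsCritical verts edges) (h5 : 5 ≤ verts.card) :
    ∀ v w₁ w₂ w₃ : α, PrimAdj verts edges v w₁ → PrimAdj verts edges v w₂ →
      PrimAdj verts edges v w₃ → w₁ = w₂ ∨ w₁ = w₃ ∨ w₂ = w₃ := by
  intro v w₁ w₂ w₃ h₁ h₂ h₃
  have hv : v ∈ verts := h₁.2.1
  have hcard : #(verts.erase v) = #verts - 1 := card_erase_of_mem hv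
  obtain ⟨M, hM, hM2, hMV⟩ := exists_isModule_of_not_isPrime (by omega) (hc.2 v hv)
  have hadj : ∀ w ∈ ({w₁, w₂, w₃} : Finset α), PrimAdj verts edges v w := by
    simp only [mem_insert, mem_singleton]
    rintro w (rfl | rfl | rfl) <;> assumption
  have hSV : ({w₁, w₂, w₃} : Finset α) ⊆ verts.erase v := fun w hw =>
    mem_erase.mpr ⟨(hadj w hw).1.symm, (hadj w hw).2.2.1⟩
  have hle := card_le_two_of_forall_eq_erase_or_card_eq_two (by omega) hSV fun w hw =>
    hM.eq_erase_or_card_eq_two hM2 hMV (hSV hw) (hadj w hw).isPrime_erase_erase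
  by_contra! hdistinct
  obtain ⟨h12, h13, h23⟩ := hdistinct
  rw [card_eq_three.mpr ⟨w₁, w₂, w₃, h12, h13, h23, rfl⟩] at hle
  omega

theorem primality_graph_degree_le_two {α : Type*} [DecidableEq α]
    (verts : Finset α) (edges : Set (Finset α)) (h3 : Is3Hypergraph verts edges)
    (hc : IsCritical verts edges) (h5 : 5 ≤ verts.card) :
    ∀ v w₁ w₂ w₃ : α, PrimAdj verts edges v w₁ → PrimAdj verts edges v w₂ →
      PrimAdj verts edges v w₃ → w₁ = w₂ ∨ w₁ = w₃ ∨ w₂ = w₃ :=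
  primality_graph_degree_le_two_general verts edges hc h5
end

section
/- Let H be a critical 3-hypergraph defined on {0,…,p−1} with p ≥ 5. If there exists k ∈ {3,…,p} such that the primality graph of H induced on {0,…,k−1} is the cycle C_k, then k is odd. -/
section Basic
variable {α : Type*} [DecidableEq α]

lemma induce_induce (W W' : Finset α) (edges : Set (Finset α)) (h : W' ⊆ W) :
    induceEdges W' (induceEdges W edges) = induceEdges W' edges := by
  ext e
  simp only [induceEdges, Set.mem_setOf_eq]
  constructor
  · rintro ⟨⟨he, -⟩, hw⟩; exact ⟨he, hw⟩
  · rintro ⟨he, hw⟩; exact ⟨⟨he, hw.trans h⟩, hw⟩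

/-- Restriction of a module to a subset of the vertex set. -/
lemma module_restrict {V W M : Finset α} {E : Set (Finset α)}
    (hM : IsModule V E M) (hW : W ⊆ V) :
    IsModule W (induceEdges W E) (M ∩ W) := by
  refine ⟨Finset.inter_subset_right, ?_⟩
  rintro e ⟨heE, heW⟩ h1 h2
  have hsd : e \ (M ∩ W) = e \ M := by
    ext x
    simp only [Finset.mem_sdiff, Finset.mem_inter]
    constructor
    · rintro ⟨hx, hx2⟩
      exact ⟨hx, fun hxM => hx2 ⟨hxM, heW hx⟩⟩
    · rintro ⟨hx, hx2⟩
      exact ⟨hx, fun h => hx2 h.1⟩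
  have h1' : (e ∩ M).Nonempty := by
    obtain ⟨x, hx⟩ := h1
    simp only [Finset.mem_inter] at hx
    exact ⟨x, Finset.mem_inter.2 ⟨hx.1, hx.2.1⟩⟩
  have h2' : (e \ M).Nonempty := by rwa [hsd] at h2
  obtain ⟨m, hmM, hint, hswap⟩ := hM.2 e heE h1' h2'
  have hme : m ∈ e := by
    have : m ∈ e ∩ M := hint ▸ Finset.mem_singleton_self m
    exact (Finset.mem_inter.1 this).1
  refine ⟨m, Finset.mem_inter.2 ⟨hmM, heW hme⟩, ?_, ?_⟩
  · ext x
    simp only [Finset.mem_inter, Finset.mem_singleton]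
    constructor
    · rintro ⟨hx, hxM, -⟩
      have : x ∈ e ∩ M := Finset.mem_inter.2 ⟨hx, hxM⟩
      rwa [hint, Finset.mem_singleton] at this
    · rintro rfl
      exact ⟨hme, hmM, heW hme⟩
  · rintro n hn
    rw [Finset.mem_inter] at hn
    refine ⟨hswap n hn.1, ?_⟩
    intro x hx
    rcases Finset.mem_union.1 hx with hx | hx
    · exact heW (Finset.mem_sdiff.1 hx).1
    · exact (Finset.mem_singleton.1 hx) ▸ hn.2

/-- A non-prime hypergraph with ≥ 3 vertices has a nontrivial module. -/
lemma exists_nontrivial_module {V : Finset α} {E : Set (Finset α)}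
    (hcard : 3 ≤ V.card) (h : ¬ IsPrime V E) :
    ∃ M, IsModule V E M ∧ M ≠ ∅ ∧ M ≠ V ∧ ∀ v, M ≠ {v} := by
  by_contra hcon
  push_neg at hcon
  apply h
  refine ⟨hcard, ?_⟩
  intro M hM
  by_contra htriv
  push_neg at htriv
  obtain ⟨v, hv⟩ := hcon M hM htriv.1 htriv.2.1
  exact htriv.2.2 v hv

end Basic

section ZTool
variable {k : ℕ}

lemma zmod_cast_inj (hk0 : 0 < k) {c d : ℕ} (hc : c < k) (hd : d < k)
    (h : (c : ZMod k) = d) : c = d := by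
  haveI : NeZero k := ⟨by omega⟩
  have := congrArg ZMod.val h
  rwa [ZMod.val_cast_of_lt hc, ZMod.val_cast_of_lt hd] at this

lemma zmod_addNat_ne (hk0 : 0 < k) (z : ZMod k) {c d : ℕ} (hc : c < k) (hd : d < k)
    (hne : c ≠ d) : z + (c : ZMod k) ≠ z + d := by
  intro h
  exact hne (zmod_cast_inj hk0 hc hd (by linear_combination h))

lemma zmod_val_addNat_ne (hk0 : 0 < k) (z : ZMod k) {c d : ℕ} (hc : c < k) (hd : d < k)
    (hne : c ≠ d) : (z + (c : ZMod k)).val ≠ (z + d).val := by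
  haveI : NeZero k := ⟨by omega⟩
  intro h
  exact zmod_addNat_ne hk0 z hc hd hne (ZMod.val_injective k h)

lemma zmod_neg_one (hk0 : 0 < k) : ((k - 1 : ℕ) : ZMod k) = -1 := by
  have h1 : ((k : ℕ) : ZMod k) = 0 := ZMod.natCast_self k
  have h2 : ((k - 1 : ℕ) : ZMod k) = (k : ℕ) - 1 := by
    push_cast [Nat.cast_sub (show 1 ≤ k by omega)]
    ring
  rw [h2, h1]; ring

lemma zmod_sub_one (hk0 : 0 < k) (z : ZMod k) : z - 1 = z + ((k - 1 : ℕ) : ZMod k) := by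
  rw [zmod_neg_one hk0]; ring

end ZTool

section Cycle

variable {p k : ℕ} {edges : Set (Finset ℕ)}

/-- consecutive cycle vertices are PrimAdj -/
lemma primAdj_consec (hk3 : 3 ≤ k) (hkp : k ≤ p)
    (hcyc : ∀ i < k, ∀ j < k, PrimAdj (Finset.range p) edges i j ↔
      (j = i + 1 ∨ i = j + 1 ∨ (i = 0 ∧ j = k - 1) ∨ (j = 0 ∧ i = k - 1)))
    (z : ZMod k) :
    PrimAdj (Finset.range p) edges z.val (z+1).val := by
  haveI : NeZero k := ⟨by omega⟩
  have hz : z.val < k := ZMod.val_lt z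
  have hz1 : (z+1).val < k := ZMod.val_lt _
  have hval : (z+1).val = (z.val + 1) % k := by
    rw [ZMod.val_add, ZMod.val_one_eq_one_mod,
      Nat.mod_eq_of_lt (show 1 < k by omega)]
  refine (hcyc z.val hz (z+1).val hz1).mpr ?_
  rcases Nat.lt_or_ge (z.val + 1) k with h | h
  · left; rw [hval, Nat.mod_eq_of_lt h]
  · have hzk : z.val = k - 1 := by omega
    right; right; right
    constructor
    · rw [hval, hzk]
      have : k - 1 + 1 = k := by omega
      rw [this, Nat.mod_self]
    · exact hzk
  
lemma prime_pair (hk3 : 3 ≤ k) (hkp : k ≤ p)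
    (hcyc : ∀ i < k, ∀ j < k, PrimAdj (Finset.range p) edges i j ↔
      (j = i + 1 ∨ i = j + 1 ∨ (i = 0 ∧ j = k - 1) ∨ (j = 0 ∧ i = k - 1)))
    (z : ZMod k) :
    IsPrime (Finset.range p \ {z.val, (z+1).val})
      (induceEdges (Finset.range p \ {z.val, (z+1).val}) edges) :=
  (primAdj_consec hk3 hkp hcyc z).2.2.2

/-- every nontrivial module of H - z is {z-1, z+1} -/
lemma module_unique (hp : 5 ≤ p) (hk3 : 3 ≤ k) (hkp : k ≤ p)
    (hcyc : ∀ i < k, ∀ j < k, PrimAdj (Finset.range p) edges i j ↔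
      (j = i + 1 ∨ i = j + 1 ∨ (i = 0 ∧ j = k - 1) ∨ (j = 0 ∧ i = k - 1)))
    (z : ZMod k) (M : Finset ℕ)
    (hM : IsModule ((Finset.range p).erase z.val)
      (induceEdges ((Finset.range p).erase z.val) edges) M)
    (hne : M ≠ ∅) (hnV : M ≠ (Finset.range p).erase z.val) (hns : ∀ v, M ≠ {v}) :
    M = {(z-1).val, (z+1).val} := by
  haveI : NeZero k := ⟨by omega⟩
  set a := z.val with ha
  set b := (z+1).val with hb
  set c := (z-1).val with hc
  have hvlt : ∀ w : ZMod k, w.val < k := fun w => ZMod.val_lt w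
  have hinj : ∀ w w' : ZMod k, w.val = w'.val → w = w' := fun w w' h => ZMod.val_injective k h
  have hk0 : 0 < k := by omega
  have hzm1 : z - 1 = z + ((k - 1 : ℕ) : ZMod k) := zmod_sub_one (by omega) z
  have hzp1 : z + 1 = z + ((1 : ℕ) : ZMod k) := by norm_num
  have hz0 : z = z + ((0 : ℕ) : ZMod k) := by norm_num
  have hab : a ≠ b := by
    have := zmod_val_addNat_ne hk0 z (show 0 < k by omega) (show 1 < k by omega) (by omega)
    rw [ha, hb, hzp1]
    rw [hz0] at this ⊢
    simpa using this
  have hac : a ≠ c := by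
    have := zmod_val_addNat_ne hk0 z (show 0 < k by omega) (show k - 1 < k by omega) (by omega)
    rw [ha, hc, hzm1]
    rw [hz0] at this ⊢
    simpa using this
  have hbc : b ≠ c := by
    have := zmod_val_addNat_ne hk0 z (show 1 < k by omega) (show k - 1 < k by omega) (by omega)
    rw [hb, hc, hzm1, hzp1]
    simpa using this
  have hap : a < p := lt_of_lt_of_le (hvlt z) hkp
  have hbp : b < p := lt_of_lt_of_le (hvlt _) hkp
  have hcp : c < p := lt_of_lt_of_le (hvlt _) hkp
  -- the two prime subgraphs
  have hPb := prime_pair hk3 hkp hcyc z      -- range p \ {a, b}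
  have hPc := prime_pair hk3 hkp hcyc (z-1)  -- range p \ {c, a}
  rw [show (z-1+1) = z by ring] at hPc
  set W' := Finset.range p \ {a, b} with hW'
  set W'' := Finset.range p \ {c, a} with hW''
  have hW'sub : W' ⊆ (Finset.range p).erase a := by
    intro x hx
    rw [Finset.mem_sdiff] at hx
    rw [Finset.mem_erase]
    exact ⟨fun h => hx.2 (by simp [h]), hx.1⟩
  have hW''sub : W'' ⊆ (Finset.range p).erase a := by
    intro x hx
    rw [Finset.mem_sdiff] at hx
    rw [Finset.mem_erase]
    exact ⟨fun h => hx.2 (by simp [h]), hx.1⟩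
  have hMsub : M ⊆ (Finset.range p).erase a := hM.1
  have haM : a ∉ M := fun h => (Finset.mem_erase.1 (hMsub h)).1 rfl
  have hMp : M ⊆ Finset.range p := fun x hx => (Finset.mem_erase.1 (hMsub hx)).2
  -- restrictions
  have hresb : M ∩ W' = M \ {b} := by
    ext x
    simp only [Finset.mem_inter, Finset.mem_sdiff, hW', Finset.mem_singleton,
      Finset.mem_insert]
    constructor
    · rintro ⟨h1, -, h3⟩; exact ⟨h1, fun h => h3 (Or.inr h)⟩
    · rintro ⟨h1, h2⟩
      exact ⟨h1, hMp h1, fun h => by rcases h with h|h; exact haM (h ▸ h1); exact h2 h⟩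
  have hresc : M ∩ W'' = M \ {c} := by
    ext x
    simp only [Finset.mem_inter, Finset.mem_sdiff, hW'', Finset.mem_singleton,
      Finset.mem_insert]
    constructor
    · rintro ⟨h1, -, h3⟩; exact ⟨h1, fun h => h3 (Or.inl h)⟩
    · rintro ⟨h1, h2⟩
      exact ⟨h1, hMp h1, fun h => by rcases h with h|h; exact h2 h; exact haM (h ▸ h1)⟩
  have htrib : M \ {b} = ∅ ∨ M \ {b} = W' ∨ ∃ x, M \ {b} = {x} := by
    have := module_restrict hM hW'sub
    rw [induce_induce _ _ _ hW'sub, hresb] at this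
    exact hPb.2 _ this
  have htric : M \ {c} = ∅ ∨ M \ {c} = W'' ∨ ∃ x, M \ {c} = {x} := by
    have := module_restrict hM hW''sub
    rw [induce_induce _ _ _ hW''sub, hresc] at this
    exact hPc.2 _ this
  have hcardW' : W'.card = p - 2 := by
    rw [hW', Finset.card_sdiff_of_subset (by
      intro x hx
      simp only [Finset.mem_insert, Finset.mem_singleton] at hx
      rcases hx with rfl|rfl <;> simp [Finset.mem_range, hap, hbp])]
    rw [Finset.card_range, Finset.card_insert_of_notMem (by simp [hab]),
      Finset.card_singleton]
  have hcardW'' : W''.card = p - 2 := by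
    rw [hW'', Finset.card_sdiff_of_subset (by
      intro x hx
      simp only [Finset.mem_insert, Finset.mem_singleton] at hx
      rcases hx with rfl|rfl <;> simp [Finset.mem_range, hap, hcp])]
    rw [Finset.card_range, Finset.card_insert_of_notMem (by simp [Ne.symm hac]),
      Finset.card_singleton]
  have hM2 : 2 ≤ M.card := by
    rcases Finset.Nonempty.exists_mem (Finset.nonempty_iff_ne_empty.2 hne) with ⟨x, hx⟩
    by_contra h
    push_neg at h
    interval_cases hMc : M.card
    · exact hne (Finset.card_eq_zero.1 hMc)
    · obtain ⟨v, hv⟩ := Finset.card_eq_one.1 hMc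
      exact hns v hv
  rcases Nat.lt_or_ge M.card 3 with hM3 | hM3
  · -- card M = 2
    have hMc2 : M.card = 2 := by omega
    have hbM : b ∈ M := by
      by_contra hbM
      have heq : M \ {b} = M := Finset.sdiff_eq_self_of_disjoint (by simp [hbM])
      rw [heq] at htrib
      rcases htrib with h|h|⟨x,h⟩
      · exact hne h
      · rw [h] at hMc2; omega
      · exact hns x h
    have hcM : c ∈ M := by
      by_contra hcM
      have heq : M \ {c} = M := Finset.sdiff_eq_self_of_disjoint (by simp [hcM])
      rw [heq] at htric
      rcases htric with h|h|⟨x,h⟩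
      · exact hne h
      · rw [h] at hMc2; omega
      · exact hns x h
    have hsub : ({c, b} : Finset ℕ) ⊆ M := by
      intro x hx
      simp only [Finset.mem_insert, Finset.mem_singleton] at hx
      rcases hx with rfl|rfl
      · exact hcM
      · exact hbM
    have := Finset.eq_of_subset_of_card_le hsub (by
      rw [hMc2, Finset.card_insert_of_notMem (by simp [Ne.symm hbc]),
        Finset.card_singleton])
    exact this.symm
  · -- card M ≥ 3 : contradiction
    exfalso
    have hbig : ∀ x : ℕ, 2 ≤ (M \ {x}).card := by
      intro x
      rw [Finset.sdiff_singleton_eq_erase]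
      rcases Finset.decidableMem x M with h | h
      · rw [Finset.erase_eq_of_notMem h]; omega
      · rw [Finset.card_erase_of_mem h]; omega
    have hMW' : M \ {b} = W' := by
      rcases htrib with h|h|⟨x,h⟩
      · have := hbig b; rw [h] at this; simp at this
      · exact h
      · have := hbig b; rw [h] at this; simp at this
    have hMW'' : M \ {c} = W'' := by
      rcases htric with h|h|⟨x,h⟩
      · have := hbig c; rw [h] at this; simp at this
      · exact h
      · have := hbig c; rw [h] at this; simp at this
    have hsup : (Finset.range p).erase a ⊆ M := by
      intro x hx
      rw [Finset.mem_erase] at hx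
      rcases eq_or_ne x b with hxb | hxb
      · have hxW : x ∈ W'' := by
          rw [hW'', Finset.mem_sdiff]
          refine ⟨hx.2, ?_⟩
          simp only [Finset.mem_insert, Finset.mem_singleton]
          rintro (h | h)
          · exact hbc (hxb.symm.trans h)
          · exact hx.1 h
        rw [← hMW''] at hxW
        exact (Finset.mem_sdiff.1 hxW).1
      · have hxW : x ∈ W' := by
          rw [hW', Finset.mem_sdiff]
          refine ⟨hx.2, ?_⟩
          simp only [Finset.mem_insert, Finset.mem_singleton]
          rintro (h | h)
          · exact hx.1 h
          · exact hxb h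
        rw [← hMW'] at hxW
        exact (Finset.mem_sdiff.1 hxW).1
    exact hnV (Finset.Subset.antisymm hMsub hsup)

lemma cycle_ne (hk3 : 3 ≤ k) (z : ZMod k) :
    z.val ≠ (z+1).val ∧ z.val ≠ (z-1).val ∧ (z+1).val ≠ (z-1).val := by
  haveI : NeZero k := ⟨by omega⟩
  have hk0 : 0 < k := by omega
  have hzm1 : z - 1 = z + ((k - 1 : ℕ) : ZMod k) := zmod_sub_one (by omega) z
  have hzp1 : z + 1 = z + ((1 : ℕ) : ZMod k) := by norm_num
  have hz0 : z = z + ((0 : ℕ) : ZMod k) := by norm_num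
  refine ⟨?_, ?_, ?_⟩
  · have := zmod_val_addNat_ne hk0 z (show 0 < k by omega) (show 1 < k by omega) (by omega)
    rw [hzp1]; rw [hz0] at this ⊢; simpa using this
  · have := zmod_val_addNat_ne hk0 z (show 0 < k by omega) (show k - 1 < k by omega) (by omega)
    rw [hzm1]; rw [hz0] at this ⊢; simpa using this
  · have := zmod_val_addNat_ne hk0 z (show 1 < k by omega) (show k - 1 < k by omega) (by omega)
    rw [hzm1, hzp1]; simpa using this

lemma module_exists (hp : 5 ≤ p) (hk3 : 3 ≤ k) (hkp : k ≤ p)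
    (hc : IsCritical (Finset.range p) edges)
    (hcyc : ∀ i < k, ∀ j < k, PrimAdj (Finset.range p) edges i j ↔
      (j = i + 1 ∨ i = j + 1 ∨ (i = 0 ∧ j = k - 1) ∨ (j = 0 ∧ i = k - 1)))
    (z : ZMod k) :
    IsModule ((Finset.range p).erase z.val)
      (induceEdges ((Finset.range p).erase z.val) edges) {(z-1).val, (z+1).val} := by
  haveI : NeZero k := ⟨by omega⟩
  have hzp : z.val ∈ Finset.range p :=
    Finset.mem_range.2 (lt_of_lt_of_le (ZMod.val_lt z) (by omega))
  have hnp := hc.2 z.val hzp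
  have hcard : 3 ≤ ((Finset.range p).erase z.val).card := by
    rw [Finset.card_erase_of_mem hzp, Finset.card_range]; omega
  obtain ⟨M, hM, h1, h2, h3⟩ := exists_nontrivial_module hcard hnp
  have := module_unique hp hk3 hkp hcyc z M hM h1 h2 h3
  rw [this] at hM
  rw [show ({(z-1).val, (z+1).val} : Finset ℕ) = {(z+1).val, (z-1).val} by
    ext x; simp only [Finset.mem_insert, Finset.mem_singleton]; tauto] at hM ⊢
  exact hM

lemma sdiff_pair_nonempty {e M : Finset ℕ} (he : e.card = 3) (hM : M.card ≤ 2) :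
    (e \ M).Nonempty := by
  rw [Finset.nonempty_iff_ne_empty]
  intro h
  have := Finset.card_le_card (Finset.sdiff_eq_empty_iff_subset.1 h)
  omega

lemma card_pair_le {x y : ℕ} : ({x, y} : Finset ℕ).card ≤ 2 := by
  apply le_trans (Finset.card_insert_le x {y})
  simp

/-- P: an edge containing both z-1 and z+1 is the triangle around z. -/
lemma P_lemma (hp : 5 ≤ p) (hk3 : 3 ≤ k) (hkp : k ≤ p)
    (h3 : Is3Hypergraph (Finset.range p) edges)
    (hc : IsCritical (Finset.range p) edges)
    (hcyc : ∀ i < k, ∀ j < k, PrimAdj (Finset.range p) edges i j ↔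
      (j = i + 1 ∨ i = j + 1 ∨ (i = 0 ∧ j = k - 1) ∨ (j = 0 ∧ i = k - 1)))
    (z : ZMod k) (e : Finset ℕ) (he : e ∈ edges)
    (h1 : (z-1).val ∈ e) (h2 : (z+1).val ∈ e) :
    e = {(z-1).val, z.val, (z+1).val} := by
  obtain ⟨hne1, hne2, hne3⟩ := cycle_ne hk3 z
  have hM := module_exists hp hk3 hkp hc hcyc z
  have hcard := (h3 e he).2
  have hzin : z.val ∈ e := by
    by_contra hz
    have hesub : e ⊆ (Finset.range p).erase z.val := by
      intro x hx
      exact Finset.mem_erase.2 ⟨fun h => hz (h ▸ hx), (h3 e he).1 hx⟩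
    obtain ⟨m, hm, hint, -⟩ := hM.2 e ⟨he, hesub⟩
      ⟨(z-1).val, Finset.mem_inter.2 ⟨h1, by simp⟩⟩
      (sdiff_pair_nonempty hcard card_pair_le)
    have e1 : (z-1).val ∈ e ∩ {(z-1).val, (z+1).val} := Finset.mem_inter.2 ⟨h1, by simp⟩
    have e2 : (z+1).val ∈ e ∩ {(z-1).val, (z+1).val} := Finset.mem_inter.2 ⟨h2, by simp⟩
    rw [hint, Finset.mem_singleton] at e1 e2
    exact hne3 (e2.trans e1.symm)
  have hsub : ({(z-1).val, z.val, (z+1).val} : Finset ℕ) ⊆ e := by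
    intro x hx
    simp only [Finset.mem_insert, Finset.mem_singleton] at hx
    rcases hx with rfl|rfl|rfl
    · exact h1
    · exact hzin
    · exact h2
  refine (Finset.eq_of_subset_of_card_le hsub ?_).symm
  rw [hcard]
  rw [Finset.card_insert_of_notMem (by simp [Ne.symm hne2, Ne.symm hne3]),
    Finset.card_insert_of_notMem (by simp [hne1]), Finset.card_singleton]

/-- S: swap z-1 for z+1 in an edge avoiding z. -/
lemma S_lemma (hp : 5 ≤ p) (hk3 : 3 ≤ k) (hkp : k ≤ p)
    (h3 : Is3Hypergraph (Finset.range p) edges)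
    (hc : IsCritical (Finset.range p) edges)
    (hcyc : ∀ i < k, ∀ j < k, PrimAdj (Finset.range p) edges i j ↔
      (j = i + 1 ∨ i = j + 1 ∨ (i = 0 ∧ j = k - 1) ∨ (j = 0 ∧ i = k - 1)))
    (z : ZMod k) (e : Finset ℕ) (he : e ∈ edges) (hz : z.val ∉ e)
    (h1 : (z-1).val ∈ e) (h2 : (z+1).val ∉ e) :
    insert (z+1).val (e.erase (z-1).val) ∈ edges := by
  obtain ⟨hne1, hne2, hne3⟩ := cycle_ne hk3 z
  have hM := module_exists hp hk3 hkp hc hcyc z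
  have hcard := (h3 e he).2
  have hesub : e ⊆ (Finset.range p).erase z.val := by
    intro x hx
    exact Finset.mem_erase.2 ⟨fun h => hz (h ▸ hx), (h3 e he).1 hx⟩
  obtain ⟨m, hm, hint, hswap⟩ := hM.2 e ⟨he, hesub⟩
    ⟨(z-1).val, Finset.mem_inter.2 ⟨h1, by simp⟩⟩
    (sdiff_pair_nonempty hcard card_pair_le)
  have e1 : (z-1).val ∈ e ∩ {(z-1).val, (z+1).val} := Finset.mem_inter.2 ⟨h1, by simp⟩
  rw [hint, Finset.mem_singleton] at e1
  have := hswap (z+1).val (by simp)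
  rw [← e1] at this
  obtain ⟨hh, -⟩ := this
  rwa [Finset.sdiff_singleton_eq_erase, Finset.union_comm, ← Finset.insert_eq] at hh

/-- S': swap z+1 for z-1 in an edge avoiding z. -/
lemma S_lemma' (hp : 5 ≤ p) (hk3 : 3 ≤ k) (hkp : k ≤ p)
    (h3 : Is3Hypergraph (Finset.range p) edges)
    (hc : IsCritical (Finset.range p) edges)
    (hcyc : ∀ i < k, ∀ j < k, PrimAdj (Finset.range p) edges i j ↔
      (j = i + 1 ∨ i = j + 1 ∨ (i = 0 ∧ j = k - 1) ∨ (j = 0 ∧ i = k - 1)))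
    (z : ZMod k) (e : Finset ℕ) (he : e ∈ edges) (hz : z.val ∉ e)
    (h1 : (z+1).val ∈ e) (h2 : (z-1).val ∉ e) :
    insert (z-1).val (e.erase (z+1).val) ∈ edges := by
  obtain ⟨hne1, hne2, hne3⟩ := cycle_ne hk3 z
  have hM := module_exists hp hk3 hkp hc hcyc z
  have hcard := (h3 e he).2
  have hesub : e ⊆ (Finset.range p).erase z.val := by
    intro x hx
    exact Finset.mem_erase.2 ⟨fun h => hz (h ▸ hx), (h3 e he).1 hx⟩
  obtain ⟨m, hm, hint, hswap⟩ := hM.2 e ⟨he, hesub⟩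
    ⟨(z+1).val, Finset.mem_inter.2 ⟨h1, by simp⟩⟩
    (sdiff_pair_nonempty hcard card_pair_le)
  have e1 : (z+1).val ∈ e ∩ {(z-1).val, (z+1).val} := Finset.mem_inter.2 ⟨h1, by simp⟩
  rw [hint, Finset.mem_singleton] at e1
  have := hswap (z-1).val (by simp)
  rw [← e1] at this
  obtain ⟨hh, -⟩ := this
  rwa [Finset.sdiff_singleton_eq_erase, Finset.union_comm, ← Finset.insert_eq] at hh

/-- vertex at offset `c` from `z` -/
abbrev VO {k : ℕ} (z : ZMod k) (c : ℕ) : ℕ := (z + (c : ZMod k)).val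

lemma VO_ne (hk0 : 0 < k) (z : ZMod k) {c d : ℕ} (hc : c < k) (hd : d < k)
    (hne : c ≠ d) : VO z c ≠ VO z d :=
  zmod_val_addNat_ne hk0 z hc hd hne

lemma VO_shift (z : ZMod k) (c d : ℕ) : VO (z + (c : ZMod k)) d = VO z (c + d) := by
  unfold VO; congr 1; push_cast; ring

lemma VO_zero (z : ZMod k) : VO z 0 = z.val := by unfold VO; norm_num

lemma VO_mod (z : ZMod k) (c : ℕ) : VO z (c + k) = VO z c := by
  unfold VO; congr 1; push_cast [ZMod.natCast_self]; ring

lemma VO_lt (hk0 : 0 < k) (z : ZMod k) (c : ℕ) : VO z c < k := by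
  haveI : NeZero k := ⟨by omega⟩
  exact ZMod.val_lt _

lemma swap_up (hp : 5 ≤ p) (hk3 : 3 ≤ k) (hkp : k ≤ p)
    (h3 : Is3Hypergraph (Finset.range p) edges)
    (hc : IsCritical (Finset.range p) edges)
    (hcyc : ∀ i < k, ∀ j < k, PrimAdj (Finset.range p) edges i j ↔
      (j = i + 1 ∨ i = j + 1 ∨ (i = 0 ∧ j = k - 1) ∨ (j = 0 ∧ i = k - 1)))
    (z : ZMod k) (c : ℕ) (e : Finset ℕ) (he : e ∈ edges)
    (hmid : VO z (c+1) ∉ e) (hin : VO z c ∈ e) (hout : VO z (c+2) ∉ e) :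
    insert (VO z (c+2)) (e.erase (VO z c)) ∈ edges := by
  have h1 : (z + ((c+1:ℕ) : ZMod k)) - 1 = z + (c : ZMod k) := by push_cast; ring
  have h2 : (z + ((c+1:ℕ) : ZMod k)) + 1 = z + ((c+2:ℕ) : ZMod k) := by push_cast; ring
  have := S_lemma hp hk3 hkp h3 hc hcyc (z + ((c+1:ℕ):ZMod k)) e he hmid
    (by rw [h1]; exact hin) (by rw [h2]; exact hout)
  rwa [h1, h2] at this

lemma swap_down (hp : 5 ≤ p) (hk3 : 3 ≤ k) (hkp : k ≤ p)
    (h3 : Is3Hypergraph (Finset.range p) edges)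
    (hc : IsCritical (Finset.range p) edges)
    (hcyc : ∀ i < k, ∀ j < k, PrimAdj (Finset.range p) edges i j ↔
      (j = i + 1 ∨ i = j + 1 ∨ (i = 0 ∧ j = k - 1) ∨ (j = 0 ∧ i = k - 1)))
    (z : ZMod k) (c : ℕ) (e : Finset ℕ) (he : e ∈ edges)
    (hmid : VO z (c+1) ∉ e) (hin : VO z (c+2) ∈ e) (hout : VO z c ∉ e) :
    insert (VO z c) (e.erase (VO z (c+2))) ∈ edges := by
  have h1 : (z + ((c+1:ℕ) : ZMod k)) - 1 = z + (c : ZMod k) := by push_cast; ring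
  have h2 : (z + ((c+1:ℕ) : ZMod k)) + 1 = z + ((c+2:ℕ) : ZMod k) := by push_cast; ring
  have := S_lemma' hp hk3 hkp h3 hc hcyc (z + ((c+1:ℕ):ZMod k)) e he hmid
    (by rw [h2]; exact hin) (by rw [h1]; exact hout)
  rwa [h1, h2] at this

lemma P_off (hp : 5 ≤ p) (hk3 : 3 ≤ k) (hkp : k ≤ p)
    (h3 : Is3Hypergraph (Finset.range p) edges)
    (hc : IsCritical (Finset.range p) edges)
    (hcyc : ∀ i < k, ∀ j < k, PrimAdj (Finset.range p) edges i j ↔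
      (j = i + 1 ∨ i = j + 1 ∨ (i = 0 ∧ j = k - 1) ∨ (j = 0 ∧ i = k - 1)))
    (z : ZMod k) (c : ℕ) (e : Finset ℕ) (he : e ∈ edges)
    (h1 : VO z c ∈ e) (h2 : VO z (c+2) ∈ e) :
    e = {VO z c, VO z (c+1), VO z (c+2)} := by
  have e1 : (z + ((c+1:ℕ) : ZMod k)) - 1 = z + (c : ZMod k) := by push_cast; ring
  have e2 : (z + ((c+1:ℕ) : ZMod k)) + 1 = z + ((c+2:ℕ) : ZMod k) := by push_cast; ring
  have := P_lemma hp hk3 hkp h3 hc hcyc (z + ((c+1:ℕ):ZMod k)) e he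
    (by rw [e1]; exact h1) (by rw [e2]; exact h2)
  rwa [e1, e2] at this

lemma third_elt {e : Finset ℕ} (h : e.card = 3) {a b : ℕ} (ha : a ∈ e) (hb : b ∈ e)
    (hab : a ≠ b) : ∃ y, y ∈ e ∧ y ≠ a ∧ y ≠ b ∧ e = {a, b, y} := by
  have h1 : ((e.erase a).erase b).card = 1 := by
    rw [Finset.card_erase_of_mem (Finset.mem_erase.2 ⟨Ne.symm hab, hb⟩),
      Finset.card_erase_of_mem ha, h]
  obtain ⟨y, hy⟩ := Finset.card_eq_one.1 h1
  have hymem : y ∈ (e.erase a).erase b := hy ▸ Finset.mem_singleton_self y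
  rw [Finset.mem_erase, Finset.mem_erase] at hymem
  obtain ⟨hyb, hya, hye⟩ := hymem
  refine ⟨y, hye, hya, hyb, ?_⟩
  have hsub : ({a, b, y} : Finset ℕ) ⊆ e := by
    intro x hx
    simp only [Finset.mem_insert, Finset.mem_singleton] at hx
    rcases hx with rfl|rfl|rfl
    · exact ha
    · exact hb
    · exact hye
  refine (Finset.eq_of_subset_of_card_le hsub ?_).symm
  rw [h, Finset.card_insert_of_notMem (by simp [hab, Ne.symm hya]),
    Finset.card_insert_of_notMem (by simp [Ne.symm hyb]), Finset.card_singleton]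

lemma insert_erase_triple {a b c d : ℕ} (hca : c ≠ a) (hcb : c ≠ b) :
    insert d (({a, b, c} : Finset ℕ).erase c) = {a, b, d} := by
  ext x
  simp only [Finset.mem_insert, Finset.mem_erase, Finset.mem_singleton]
  constructor
  · rintro (rfl | ⟨hx, (rfl|rfl|rfl)⟩) <;> tauto
  · rintro (rfl|rfl|rfl) <;> tauto

/-- if a triangle (three consecutive cycle vertices) were an edge, contradiction (k even ≥ 6). -/
lemma no_triangle (hp : 5 ≤ p) (hk3 : 3 ≤ k) (hkp : k ≤ p)
    (h3 : Is3Hypergraph (Finset.range p) edges)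
    (hc : IsCritical (Finset.range p) edges)
    (hcyc : ∀ i < k, ∀ j < k, PrimAdj (Finset.range p) edges i j ↔
      (j = i + 1 ∨ i = j + 1 ∨ (i = 0 ∧ j = k - 1) ∨ (j = 0 ∧ i = k - 1)))
    (hke : 2 ∣ k) (hk6 : 6 ≤ k)
    (z : ZMod k) (hT : ({VO z 0, VO z 1, VO z 2} : Finset ℕ) ∈ edges) : False := by
  have hk0 : 0 < k := by omega
  have key : ∀ t, 2 + 2*t ≤ k - 2 → ({VO z 0, VO z 1, VO z (2+2*t)} : Finset ℕ) ∈ edges := by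
    intro t
    induction t with
    | zero => intro _; simpa using hT
    | succ t ih =>
      intro hbound
      have hb' : 2 + 2*t ≤ k - 2 := by omega
      have hE := ih (by omega)
      set c := 2 + 2*t with hcdef
      have hmid : VO z (c+1) ∉ ({VO z 0, VO z 1, VO z c} : Finset ℕ) := by
        simp only [Finset.mem_insert, Finset.mem_singleton]
        push_neg
        exact ⟨VO_ne hk0 z (by omega) (by omega) (by omega),
          VO_ne hk0 z (by omega) (by omega) (by omega),
          VO_ne hk0 z (by omega) (by omega) (by omega)⟩
      have hout : VO z (c+2) ∉ ({VO z 0, VO z 1, VO z c} : Finset ℕ) := by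
        simp only [Finset.mem_insert, Finset.mem_singleton]
        push_neg
        exact ⟨VO_ne hk0 z (by omega) (by omega) (by omega),
          VO_ne hk0 z (by omega) (by omega) (by omega),
          VO_ne hk0 z (by omega) (by omega) (by omega)⟩
      have hin : VO z c ∈ ({VO z 0, VO z 1, VO z c} : Finset ℕ) := by simp
      have := swap_up hp hk3 hkp h3 hc hcyc z c _ hE hmid hin hout
      rw [insert_erase_triple (VO_ne hk0 z (by omega) (by omega) (by omega))
        (VO_ne hk0 z (by omega) (by omega) (by omega))] at this
      have hrw : 2 + 2*(t+1) = c + 2 := by omega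
      rwa [hrw]
  have hfin := key ((k-4)/2) (by omega)
  have hkk : 2 + 2*((k-4)/2) = k - 2 := by omega
  rw [hkk] at hfin
  -- now apply P at offset k-2 : the edge contains VO z (k-2) and VO z k = VO z 0
  have hP := P_off hp hk3 hkp h3 hc hcyc z (k-2) _ hfin (by simp)
    (by
      have : k - 2 + 2 = 0 + k := by omega
      rw [this, VO_mod]
      simp [VO_zero])
  have h1mem : VO z 1 ∈ ({VO z 0, VO z 1, VO z (k-2)} : Finset ℕ) := by simp
  rw [hP] at h1mem
  simp only [Finset.mem_insert, Finset.mem_singleton] at h1mem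
  rcases h1mem with h|h|h
  · exact VO_ne hk0 z (by omega) (by omega) (by omega) h
  · exact VO_ne hk0 z (by omega) (by omega) (by omega) h
  · rw [show k - 2 + 2 = 0 + k by omega, VO_mod] at h
    exact VO_ne hk0 z (by omega) (by omega) (by omega) h

/-- no edge contains two cycle vertices at offset 2 (k even). -/
lemma Q2 (hp : 5 ≤ p) (hk3 : 3 ≤ k) (hkp : k ≤ p)
    (h3 : Is3Hypergraph (Finset.range p) edges)
    (hc : IsCritical (Finset.range p) edges)
    (hcyc : ∀ i < k, ∀ j < k, PrimAdj (Finset.range p) edges i j ↔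
      (j = i + 1 ∨ i = j + 1 ∨ (i = 0 ∧ j = k - 1) ∨ (j = 0 ∧ i = k - 1)))
    (hke : 2 ∣ k)
    (z : ZMod k) (e : Finset ℕ) (he : e ∈ edges)
    (h0 : VO z 0 ∈ e) (h2 : VO z 2 ∈ e) : False := by
  have hk0 : 0 < k := by omega
  have hP := P_off hp hk3 hkp h3 hc hcyc z 0 e he (by simpa using h0) (by simpa using h2)
  rcases show k = 4 ∨ 6 ≤ k by omega with hk4 | hk6
  · -- k = 4
    have hP2 := P_off hp hk3 hkp h3 hc hcyc z 2 e he h2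
      (by
        have : 2 + 2 = 0 + k := by omega
        rw [this, VO_mod]
        exact h0)
    have h1mem : VO z 1 ∈ e := by rw [hP]; simp
    rw [hP2] at h1mem
    simp only [Finset.mem_insert, Finset.mem_singleton] at h1mem
    rcases h1mem with h|h|h
    · exact VO_ne hk0 z (by omega) (by omega) (by omega) h
    · exact VO_ne hk0 z (by omega) (by omega) (by omega) h
    · rw [show 2 + 2 = 0 + k by omega, VO_mod] at h
      exact VO_ne hk0 z (by omega) (by omega) (by omega) h
  · exact no_triangle hp hk3 hkp h3 hc hcyc hke hk6 z (by rw [← hP]; exact he)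

/-- no edge contains two cycle vertices at even offset (k even). -/
lemma Qs (hp : 5 ≤ p) (hk3 : 3 ≤ k) (hkp : k ≤ p)
    (h3 : Is3Hypergraph (Finset.range p) edges)
    (hc : IsCritical (Finset.range p) edges)
    (hcyc : ∀ i < k, ∀ j < k, PrimAdj (Finset.range p) edges i j ↔
      (j = i + 1 ∨ i = j + 1 ∨ (i = 0 ∧ j = k - 1) ∨ (j = 0 ∧ i = k - 1)))
    (hke : 2 ∣ k) :
    ∀ s : ℕ, 2 ≤ s → s ≤ k - 2 → 2 ∣ s → ∀ z : ZMod k, ∀ e ∈ edges,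
      VO z 0 ∈ e → VO z s ∈ e → False := by
  have hk0 : 0 < k := by omega
  intro s
  induction s using Nat.strong_induction_on with
  | _ s IH =>
    intro hs2 hsk hse z e he h0 hs
    rcases eq_or_lt_of_le hs2 with hs2' | hs4
    · exact Q2 hp hk3 hkp h3 hc hcyc hke z e he h0 (hs2' ▸ hs)
    have hs4 : 4 ≤ s := by omega
    obtain ⟨y, hye, hy0, hys, hrep⟩ := third_elt (h3 e he).2 h0 hs
      (VO_ne hk0 z (by omega) (by omega) (by omega))
    by_cases hy1 : y = VO z (s-2)
    · subst hy1
      exact IH (s-2) (by omega) (by omega) (by omega) (by omega) z e he h0 hye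
    by_cases hy2 : y = VO z (s-1)
    · -- swap 0 up to 2
      subst hy2
      have hm1 : VO z 1 ∉ e := by
        rw [hrep]
        simp only [Finset.mem_insert, Finset.mem_singleton]
        push_neg
        exact ⟨VO_ne hk0 z (by omega) (by omega) (by omega),
          VO_ne hk0 z (by omega) (by omega) (by omega),
          VO_ne hk0 z (by omega) (by omega) (by omega)⟩
      have hm2 : VO z 2 ∉ e := by
        rw [hrep]
        simp only [Finset.mem_insert, Finset.mem_singleton]
        push_neg
        exact ⟨VO_ne hk0 z (by omega) (by omega) (by omega),
          VO_ne hk0 z (by omega) (by omega) (by omega),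
          VO_ne hk0 z (by omega) (by omega) (by omega)⟩
      have hsw := swap_up hp hk3 hkp h3 hc hcyc z 0 e he (by simpa using hm1)
        h0 (by simpa using hm2)
      refine IH (s-2) (by omega) (by omega) (by omega) (by omega) (z + ((2:ℕ) : ZMod k))
        _ hsw ?_ ?_
      · rw [VO_shift]
        simp
      · rw [VO_shift, show 2 + (s - 2) = s by omega]
        exact Finset.mem_insert_of_mem (Finset.mem_erase.2
          ⟨VO_ne hk0 z (by omega) (by omega) (by omega), hs⟩)
    · -- swap s down to s-2
      have hm1 : VO z (s-1) ∉ e := by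
        rw [hrep]
        simp only [Finset.mem_insert, Finset.mem_singleton]
        push_neg
        exact ⟨VO_ne hk0 z (by omega) (by omega) (by omega),
          VO_ne hk0 z (by omega) (by omega) (by omega),
          fun h => hy2 h.symm⟩
      have hm2 : VO z (s-2) ∉ e := by
        rw [hrep]
        simp only [Finset.mem_insert, Finset.mem_singleton]
        push_neg
        exact ⟨VO_ne hk0 z (by omega) (by omega) (by omega),
          VO_ne hk0 z (by omega) (by omega) (by omega),
          fun h => hy1 h.symm⟩
      have hsw := swap_down hp hk3 hkp h3 hc hcyc z (s-2) e he
        (by rw [show s - 2 + 1 = s - 1 by omega]; exact hm1)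
        (by rw [show s - 2 + 2 = s by omega]; exact hs) hm2
      rw [show s - 2 + 2 = s by omega] at hsw
      refine IH (s-2) (by omega) (by omega) (by omega) (by omega) z _ hsw ?_ ?_
      · exact Finset.mem_insert_of_mem (Finset.mem_erase.2
          ⟨VO_ne hk0 z (by omega) (by omega) (by omega), h0⟩)
      · exact Finset.mem_insert_self _ _

/-- no edge contains two distinct cycle vertices of the same parity (k even). -/
lemma no_parity_pair (hp : 5 ≤ p) (hk3 : 3 ≤ k) (hkp : k ≤ p)
    (h3 : Is3Hypergraph (Finset.range p) edges)
    (hc : IsCritical (Finset.range p) edges)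
    (hcyc : ∀ i < k, ∀ j < k, PrimAdj (Finset.range p) edges i j ↔
      (j = i + 1 ∨ i = j + 1 ∨ (i = 0 ∧ j = k - 1) ∨ (j = 0 ∧ i = k - 1)))
    (hke : 2 ∣ k)
    (a b : ZMod k) (hne : a ≠ b) (hpar : 2 ∣ (b - a).val)
    (e : Finset ℕ) (he : e ∈ edges) (ha : a.val ∈ e) (hb : b.val ∈ e) : False := by
  haveI : NeZero k := ⟨by omega⟩
  have hk0 : 0 < k := by omega
  set s := (b - a).val with hsdef
  have hs0 : s ≠ 0 := by
    intro h
    have : b - a = 0 := by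
      have := (ZMod.val_eq_zero (b - a)).1 h
      exact this
    apply hne
    linear_combination -this
  have hslt : s < k := ZMod.val_lt _
  have hsk : s ≤ k - 2 := by omega
  refine Qs hp hk3 hkp h3 hc hcyc hke s (by omega) hsk hpar a e he ?_ ?_
  · rw [VO_zero]; exact ha
  · have hcast : ((s : ℕ) : ZMod k) = b - a := ZMod.natCast_rightInverse (b - a)
    unfold VO
    rw [hcast, show a + (b - a) = b by ring]
    exact hb

lemma val_sub_parity (hke : 2 ∣ k) (hk0 : 0 < k) (a b : ZMod k) :
    ((b - a).val + a.val) % 2 = b.val % 2 := by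
  haveI : NeZero k := ⟨by omega⟩
  have h1 : (b - a + a).val = ((b - a).val + a.val) % k := ZMod.val_add _ _
  rw [sub_add_cancel] at h1
  rw [h1, Nat.mod_mod_of_dvd _ hke]

lemma walk (hp : 5 ≤ p) (hk3 : 3 ≤ k) (hkp : k ≤ p)
    (h3 : Is3Hypergraph (Finset.range p) edges)
    (hc : IsCritical (Finset.range p) edges)
    (hcyc : ∀ i < k, ∀ j < k, PrimAdj (Finset.range p) edges i j ↔
      (j = i + 1 ∨ i = j + 1 ∨ (i = 0 ∧ j = k - 1) ∨ (j = 0 ∧ i = k - 1)))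
    (hke : 2 ∣ k) (zb : ZMod k) (R : Finset ℕ)
    (hR : ∀ x ∈ R, x < k → x = zb.val) :
    ∀ j, j < k/2 → insert (VO zb (2*j+1)) R ∈ edges →
      ∀ j', j' < k/2 → insert (VO zb (2*j'+1)) R ∈ edges := by
  have hk0 : 0 < k := by omega
  have hnotR : ∀ c : ℕ, 0 < c → c < k → VO zb c ∉ R := by
    intro c hc1 hc2 hmem
    have hx := hR _ hmem (VO_lt hk0 zb c)
    rw [← VO_zero zb] at hx
    exact VO_ne hk0 zb hc2 hk0 (by omega) hx
  have hstep : ∀ j, j + 1 < k/2 →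
      (insert (VO zb (2*j+1)) R ∈ edges ↔ insert (VO zb (2*j+3)) R ∈ edges) := by
    intro j hj
    have b1 : 2*j+1 < k := by omega
    have b2 : 2*j+2 < k := by omega
    have b3 : 2*j+3 < k := by omega
    constructor
    · intro he
      have hmid : VO zb (2*j+1+1) ∉ insert (VO zb (2*j+1)) R := by
        rw [show 2*j+1+1 = 2*j+2 by omega]
        simp only [Finset.mem_insert]
        push_neg
        exact ⟨VO_ne hk0 zb b2 b1 (by omega), hnotR _ (by omega) b2⟩
      have hout : VO zb (2*j+1+2) ∉ insert (VO zb (2*j+1)) R := by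
        rw [show 2*j+1+2 = 2*j+3 by omega]
        simp only [Finset.mem_insert]
        push_neg
        exact ⟨VO_ne hk0 zb b3 b1 (by omega), hnotR _ (by omega) b3⟩
      have hres := swap_up hp hk3 hkp h3 hc hcyc zb (2*j+1) _ he hmid
        (Finset.mem_insert_self _ _) hout
      rw [Finset.erase_insert (hnotR _ (by omega) b1),
        show 2*j+1+2 = 2*j+3 by omega] at hres
      exact hres
    · intro he
      have hmid : VO zb (2*j+1+1) ∉ insert (VO zb (2*j+3)) R := by
        rw [show 2*j+1+1 = 2*j+2 by omega]
        simp only [Finset.mem_insert]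
        push_neg
        exact ⟨VO_ne hk0 zb b2 b3 (by omega), hnotR _ (by omega) b2⟩
      have hout : VO zb (2*j+1) ∉ insert (VO zb (2*j+3)) R := by
        simp only [Finset.mem_insert]
        push_neg
        exact ⟨VO_ne hk0 zb b1 b3 (by omega), hnotR _ (by omega) b1⟩
      have hin : VO zb (2*j+1+2) ∈ insert (VO zb (2*j+3)) R := by
        rw [show 2*j+1+2 = 2*j+3 by omega]
        exact Finset.mem_insert_self _ _
      have hres := swap_down hp hk3 hkp h3 hc hcyc zb (2*j+1) _ he hmid hin hout
      rw [show 2*j+1+2 = 2*j+3 by omega,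
        Finset.erase_insert (hnotR _ (by omega) b3)] at hres
      exact hres
  have hchain : ∀ j, j < k/2 →
      (insert (VO zb 1) R ∈ edges ↔ insert (VO zb (2*j+1)) R ∈ edges) := by
    intro j
    induction j with
    | zero => intro _; rw [show 2*0+1 = 1 by norm_num]
    | succ j ih =>
      intro hj
      rw [show 2*(j+1)+1 = 2*j+3 by ring]
      exact (ih (by omega)).trans (hstep j hj)
  intro j hj he j' hj'
  exact (hchain j' hj').1 ((hchain j hj).2 he)

/-- main lemma: k even leads to a contradiction. -/
lemma even_k_false (hp : 5 ≤ p) (hk3 : 3 ≤ k) (hkp : k ≤ p)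
    (h3 : Is3Hypergraph (Finset.range p) edges)
    (hc : IsCritical (Finset.range p) edges)
    (hcyc : ∀ i < k, ∀ j < k, PrimAdj (Finset.range p) edges i j ↔
      (j = i + 1 ∨ i = j + 1 ∨ (i = 0 ∧ j = k - 1) ∨ (j = 0 ∧ i = k - 1)))
    (hke : 2 ∣ k) : False := by
  haveI : NeZero k := ⟨by omega⟩
  have hk0 : 0 < k := by omega
  have hk4 : 4 ≤ k := by omega
  set A : Finset ℕ := (Finset.range k).filter (fun x => x % 2 = 0) with hA
  have hmemA : ∀ x, x ∈ A ↔ (x < k ∧ x % 2 = 0) := by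
    intro x; rw [hA]; simp [Finset.mem_filter, Finset.mem_range]
  -- no two distinct elements of e are same-parity cycle vertices
  have hpair : ∀ e ∈ edges, ∀ x ∈ e, ∀ y ∈ e, x < k → y < k → x % 2 = y % 2 → x = y := by
    intro e he x hx y hy hxk hyk hparity
    by_contra hne
    have hvx : ((x : ZMod k)).val = x := ZMod.val_cast_of_lt hxk
    have hvy : ((y : ZMod k)).val = y := ZMod.val_cast_of_lt hyk
    have hzne : (x : ZMod k) ≠ (y : ZMod k) := by
      intro h; exact hne (zmod_cast_inj hk0 hxk hyk h)
    have hps := val_sub_parity hke hk0 (x : ZMod k) (y : ZMod k)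
    rw [hvx, hvy] at hps
    have hdvd : 2 ∣ ((y : ZMod k) - (x : ZMod k)).val := by omega
    exact no_parity_pair hp hk3 hkp h3 hc hcyc hke _ _ hzne hdvd e he
      (by rw [hvx]; exact hx) (by rw [hvy]; exact hy)
  have hmod : IsModule (Finset.range p) edges A := by
    constructor
    · intro x hx
      rw [hmemA] at hx
      exact Finset.mem_range.2 (by omega)
    intro e he hint hsd
    obtain ⟨m, hm⟩ := hint
    rw [Finset.mem_inter] at hm
    obtain ⟨hme, hmA⟩ := hm
    have hmk : m < k := ((hmemA m).1 hmA).1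
    have hmev : m % 2 = 0 := ((hmemA m).1 hmA).2
    have hintm : e ∩ A = {m} := by
      ext x
      rw [Finset.mem_inter, Finset.mem_singleton]
      constructor
      · rintro ⟨hxe, hxA⟩
        rw [hmemA] at hxA
        exact hpair e he x hxe m hme hxA.1 hmk (by omega) 
      · rintro rfl; exact ⟨hme, hmA⟩
    refine ⟨m, hmA, hintm, ?_⟩
    -- setup the walk
    set R := e.erase m with hR
    have heR : e = insert m R := (Finset.insert_erase hme).symm
    have hRA : ∀ x ∈ R, x < k → x % 2 = 1 := by
      intro x hxR hxk
      have hxe : x ∈ e := Finset.mem_of_mem_erase hxR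
      have hxm : x ≠ m := Finset.ne_of_mem_erase hxR
      rcases Nat.mod_two_eq_zero_or_one x with h | h
      · exact absurd (hpair e he x hxe m hme hxk hmk (by omega)) hxm
      · exact h
    -- choose the blocked odd vertex
    obtain ⟨zb, hzbodd, hzbR⟩ : ∃ zb : ZMod k, zb.val % 2 = 1 ∧
        (∀ x ∈ R, x < k → x = zb.val) := by
      by_cases hex : ∃ x ∈ R, x < k
      · obtain ⟨x, hxR, hxk⟩ := hex
        refine ⟨(x : ZMod k), ?_, ?_⟩
        · rw [ZMod.val_cast_of_lt hxk]; exact hRA x hxR hxk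
        · intro x' hx'R hx'k
          rw [ZMod.val_cast_of_lt hxk]
          exact hpair e he x' (Finset.mem_of_mem_erase hx'R) x
            (Finset.mem_of_mem_erase hxR) hx'k hxk
            (by rw [hRA x' hx'R hx'k, hRA x hxR hxk])
      · push_neg at hex
        refine ⟨((1:ℕ) : ZMod k), ?_, ?_⟩
        · rw [ZMod.val_cast_of_lt (by omega)]
        · intro x hxR hxk; exact absurd hxk (Nat.not_lt.2 (hex x hxR))
    -- m = VO zb (2*j0+1)
    have hoffs : ∀ w : ℕ, w ∈ A → ∃ j < k/2, w = VO zb (2*j+1) := by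
      intro w hw
      rw [hmemA] at hw
      set d := (((w:ℕ) : ZMod k) - zb).val with hd
      have hdlt : d < k := ZMod.val_lt _
      have hps := val_sub_parity hke hk0 zb ((w:ℕ) : ZMod k)
      rw [ZMod.val_cast_of_lt hw.1] at hps
      have hdodd : d % 2 = 1 := by omega
      refine ⟨(d-1)/2, by omega, ?_⟩
      have h2j : 2*((d-1)/2)+1 = d := by omega
      rw [h2j]
      unfold VO
      rw [hd, ZMod.natCast_rightInverse _, show zb + (((w:ℕ):ZMod k) - zb) = ((w:ℕ):ZMod k) by ring,
        ZMod.val_cast_of_lt hw.1]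
    obtain ⟨j0, hj0, hm0⟩ := hoffs m hmA
    intro n hnA
    obtain ⟨j1, hj1, hn1⟩ := hoffs n hnA
    have hstart : insert (VO zb (2*j0+1)) R ∈ edges := by rw [← hm0, ← heR]; exact he
    have hend := walk hp hk3 hkp h3 hc hcyc hke zb R hzbR j0 hj0 hstart j1 hj1
    rw [← hn1] at hend
    rwa [Finset.sdiff_singleton_eq_erase, Finset.union_comm, ← Finset.insert_eq]
  -- A is a nontrivial module: contradiction with primality
  rcases hc.1.2 A hmod with h | h | ⟨v, h⟩
  · have : (0:ℕ) ∈ A := (hmemA 0).2 ⟨by omega, by omega⟩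
    rw [h] at this; simp at this
  · have : (1:ℕ) ∈ A := by rw [h]; exact Finset.mem_range.2 (by omega)
    rw [hmemA] at this; omega
  · have h0 : (0:ℕ) ∈ A := (hmemA 0).2 ⟨by omega, by omega⟩
    have h2 : (2:ℕ) ∈ A := (hmemA 2).2 ⟨by omega, by omega⟩
    rw [h, Finset.mem_singleton] at h0 h2
    omega

end Cycle

theorem primality_cycle_is_odd
    (p : ℕ) (hp : 5 ≤ p) (edges : Set (Finset ℕ))
    (h3 : Is3Hypergraph (Finset.range p) edges)
    (hc : IsCritical (Finset.range p) edges)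
    (k : ℕ) (hk3 : 3 ≤ k) (hkp : k ≤ p)
    (hcyc : ∀ i < k, ∀ j < k, PrimAdj (Finset.range p) edges i j ↔
      (j = i + 1 ∨ i = j + 1 ∨ (i = 0 ∧ j = k - 1) ∨ (j = 0 ∧ i = k - 1))) :
    Odd k := by
  rcases Nat.even_or_odd k with hev | hodd
  · exact absurd (even_k_false hp hk3 hkp h3 hc hcyc hev.two_dvd) not_false
  · exact hodd
end
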